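/- arXiv:1801.05753 — 6 statements merged into one kernel-verified Lean document; each statement's English description precedes it below -/
import Mathlib

section
/- Let n be a positive integer and let A be a real symmetric n×n matrix all of whose off-diagonal entries are non-positive (i.e. A i j ≤ 0 whenever i ≠ j). Then A is positive definite if and only if there exists a vector v ∈ ℝⁿ with all entries strictly positive such that the vector A·v also has all entries strictly positive. -/
/-!
Writing `x = v * y` coordinatewise gives the identity
`2 xᵀAx = 2 ∑ᵢ yᵢ² vᵢ (Av)ᵢ - ∑ᵢⱼ Aᵢⱼ vᵢ vⱼ (yᵢ - yⱼ)²` for symmetric `A`; when `v > 0`, `Av > 0`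
and the off-diagonal entries are `≤ 0`, the first sum is positive for `x ≠ 0` and the second
is `≤ 0`, so `A` is positive definite.

Conversely take `v = A⁻¹ 𝟙`. Its negative part `w` has `wᵀAv ≥ 0`, while `wᵀAv⁺ ≤ 0` because
`w` and `v⁺` have disjoint supports and `A` is nonpositive off the diagonal; hence `wᵀAw ≤ 0`,
so `w = 0` by positive definiteness. Finally `vᵢ = 0` would make `(Av)ᵢ = 1` a sum of
nonpositive terms, so `v > 0`.
-/

open Matrix

namespace Matrix

variable {ι R : Type*} [Fintype ι]

section OrderedRing

variable [CommRing R] [LinearOrder R] [IsStrictOrderedRing R] {A : Matrix ι ι R}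

theorem dotProduct_mulVec_nonpos_of_disjoint (hoff : ∀ i j, i ≠ j → A i j ≤ 0) {w p : ι → R}
    (hw : 0 ≤ w) (hp : 0 ≤ p) (hwp : ∀ i, w i = 0 ∨ p i = 0) : w ⬝ᵥ A *ᵥ p ≤ 0 := by
  simp only [dotProduct, mulVec, Finset.mul_sum]
  refine Finset.sum_nonpos fun i _ => Finset.sum_nonpos fun j _ => ?_
  rcases eq_or_ne i j with rfl | hij
  · rcases hwp i with h | h <;> simp [h]
  · exact mul_nonpos_of_nonneg_of_nonpos (hw i)
      (mul_nonpos_of_nonpos_of_nonneg (hoff i j hij) (hp j))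

theorem pos_of_nonneg_of_mulVec_pos (hoff : ∀ i j, i ≠ j → A i j ≤ 0) {v : ι → R}
    (hv : 0 ≤ v) (hAv : ∀ i, 0 < (A *ᵥ v) i) (i : ι) : 0 < v i := by
  refine (hv i).lt_of_ne' fun hvi => (hAv i).not_ge ?_
  refine Finset.sum_nonpos fun j _ => ?_
  rcases eq_or_ne i j with rfl | hij
  · simp [hvi]
  · exact mul_nonpos_of_nonpos_of_nonneg (hoff i j hij) (hv j)

end OrderedRing

theorem IsSymm.two_mul_dotProduct_mulVec_eq [CommRing R] {A : Matrix ι ι R} (hA : A.IsSymm)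
    (v y : ι → R) :
    2 * ((v * y) ⬝ᵥ A *ᵥ (v * y)) =
      2 * ∑ i, y i ^ 2 * (v i * (A *ᵥ v) i) - ∑ i, ∑ j, A i j * v i * v j * (y i - y j) ^ 2 := by
  have hswap : ∑ i, ∑ j, A i j * v i * v j * y j ^ 2 = ∑ i, ∑ j, A i j * v i * v j * y i ^ 2 := by
    rw [Finset.sum_comm]
    refine Finset.sum_congr rfl fun i _ => Finset.sum_congr rfl fun j _ => ?_
    rw [hA.apply i j]; ring
  have hexpand : ∑ i, ∑ j, A i j * v i * v j * (y i - y j) ^ 2 =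
      ∑ i, ∑ j, A i j * v i * v j * y i ^ 2 + ∑ i, ∑ j, A i j * v i * v j * y j ^ 2
        - 2 * ∑ i, ∑ j, (v i * y i) * (A i j * (v j * y j)) := by
    simp only [← Finset.sum_add_distrib, Finset.mul_sum, ← Finset.sum_sub_distrib]
    exact Finset.sum_congr rfl fun i _ => Finset.sum_congr rfl fun j _ => by ring
  have hquad : (v * y) ⬝ᵥ A *ᵥ (v * y) = ∑ i, ∑ j, (v i * y i) * (A i j * (v j * y j)) := by
    simp only [dotProduct, mulVec, Pi.mul_apply, Finset.mul_sum]
  have hdiag : ∑ i, y i ^ 2 * (v i * (A *ᵥ v) i) = ∑ i, ∑ j, A i j * v i * v j * y i ^ 2 := by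
    simp only [dotProduct, mulVec, Finset.mul_sum]
    exact Finset.sum_congr rfl fun i _ => Finset.sum_congr rfl fun j _ => by ring
  rw [hexpand, hswap, hquad, hdiag]
  ring

section OrderedField

variable [Field R] [LinearOrder R] [IsStrictOrderedRing R] [StarRing R] [TrivialStar R]
  {A : Matrix ι ι R}

theorem PosDef.nonneg_of_mulVec_nonneg (hA : A.PosDef) (hoff : ∀ i j, i ≠ j → A i j ≤ 0)
    {v : ι → R} (hAv : 0 ≤ A *ᵥ v) : 0 ≤ v := by
  rw [← negPart_eq_zero]
  by_contra hne
  have hpos : 0 < v⁻ ⬝ᵥ A *ᵥ v⁻ := by simpa using hA.dotProduct_mulVec_pos hne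
  have hdisj : v⁻ ⬝ᵥ A *ᵥ v⁺ ≤ 0 :=
    dotProduct_mulVec_nonpos_of_disjoint hoff (negPart_nonneg v) (posPart_nonneg v) fun i => by
      rcases le_total (v i) 0 with h | h <;> simp [h]
  have hnonneg : 0 ≤ v⁻ ⬝ᵥ A *ᵥ v := dotProduct_nonneg_of_nonneg (negPart_nonneg v) hAv
  have hsplit : v⁻ ⬝ᵥ A *ᵥ v = v⁻ ⬝ᵥ A *ᵥ v⁺ - v⁻ ⬝ᵥ A *ᵥ v⁻ := by
    rw [← dotProduct_sub, ← mulVec_sub, posPart_sub_negPart]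
  linarith

theorem PosDef.exists_pos_mulVec_pos [DecidableEq ι] (hA : A.PosDef)
    (hoff : ∀ i j, i ≠ j → A i j ≤ 0) : ∃ v : ι → R, (∀ i, 0 < v i) ∧ ∀ i, 0 < (A *ᵥ v) i := by
  have hAv : A *ᵥ (A⁻¹ *ᵥ 1) = 1 := by
    rw [mulVec_mulVec, mul_nonsing_inv _ ((isUnit_iff_isUnit_det A).1 hA.isUnit), one_mulVec]
  have hone : ∀ i, 0 < (A *ᵥ (A⁻¹ *ᵥ 1)) i := fun i => by simp [hAv]
  exact ⟨_, pos_of_nonneg_of_mulVec_pos hoff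
    (hA.nonneg_of_mulVec_nonneg hoff fun i => (hone i).le) hone, hone⟩

theorem IsSymm.posDef_of_pos_mulVec_pos (hA : A.IsSymm) (hoff : ∀ i j, i ≠ j → A i j ≤ 0)
    {v : ι → R} (hv : ∀ i, 0 < v i) (hAv : ∀ i, 0 < (A *ᵥ v) i) : A.PosDef := by
  refine posDef_iff_dotProduct_mulVec.2 ⟨isHermitian_iff_isSymm.2 hA, fun x hx => ?_⟩
  obtain ⟨k, hk⟩ : ∃ k, x k ≠ 0 := Function.ne_iff.1 hx
  have hx : v * (x / v) = x := funext fun i => mul_div_cancel₀ (x i) (hv i).ne'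
  have hdiag : 0 < ∑ i, (x / v) i ^ 2 * (v i * (A *ᵥ v) i) := by
    refine Finset.sum_pos' (fun i _ => ?_) ⟨k, Finset.mem_univ k, ?_⟩
    · exact mul_nonneg (sq_nonneg _) (mul_pos (hv i) (hAv i)).le
    · exact mul_pos (sq_pos_of_ne_zero (div_ne_zero hk (hv k).ne')) (mul_pos (hv k) (hAv k))
  have hoffdiag : ∑ i, ∑ j, A i j * v i * v j * ((x / v) i - (x / v) j) ^ 2 ≤ 0 := by
    refine Finset.sum_nonpos fun i _ => Finset.sum_nonpos fun j _ => ?_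
    rcases eq_or_ne i j with rfl | hij
    · simp
    · have hweight : A i j * v i * v j ≤ 0 := mul_nonpos_of_nonpos_of_nonneg
        (mul_nonpos_of_nonpos_of_nonneg (hoff i j hij) (hv i).le) (hv j).le
      exact mul_nonpos_of_nonpos_of_nonneg hweight (sq_nonneg _)
  have hidentity := hA.two_mul_dotProduct_mulVec_eq v (x / v)
  rw [hx] at hidentity
  simp only [star_trivial]
  linarith

end OrderedField

end Matrix

theorem posDef_iff_exists_pos_mulVec_pos_general
    (n : ℕ) (A : Matrix (Fin n) (Fin n) ℝ)
    (hsymm : A.IsSymm)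
    (hoff : ∀ i j : Fin n, i ≠ j → A i j ≤ 0) :
    A.PosDef ↔ ∃ v : Fin n → ℝ, (∀ i, 0 < v i) ∧ ∀ i, 0 < (A *ᵥ v) i :=
  ⟨fun hA => hA.exists_pos_mulVec_pos hoff,
    fun ⟨_, hv, hAv⟩ => hsymm.posDef_of_pos_mulVec_pos hoff hv hAv⟩

/-- Criterion for positive definiteness: a real symmetric `n × n` matrix `A` with
non-positive off-diagonal entries is positive definite if and only if there exists a
vector `v` with all entries strictly positive such that `A * v` also has all entries
strictly positive. -/
theorem posDef_iff_exists_pos_mulVec_pos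
    (n : ℕ) (hn : 0 < n) (A : Matrix (Fin n) (Fin n) ℝ)
    (hsymm : A.IsSymm)
    (hoff : ∀ i j : Fin n, i ≠ j → A i j ≤ 0) :
    A.PosDef ↔ ∃ v : Fin n → ℝ, (∀ i, 0 < v i) ∧ ∀ i, 0 < (A *ᵥ v) i :=
  posDef_iff_exists_pos_mulVec_pos_general n A hsymm hoff
end

section
/- Let n be a positive integer and let A be a real symmetric n×n matrix all of whose off-diagonal entries are non-negative (i.e. A i j ≥ 0 whenever i ≠ j). Then A is negative definite if and only if there exists a vector v ∈ ℝⁿ with all entries strictly positive such that the vector A·v has all entries strictly negative. -/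
/-!
If `v > 0` and `A v < 0`, bounding each off-diagonal term `2 xᵢ Aᵢⱼ xⱼ` by AM-GM with weights
`vⱼ / vᵢ` and `vᵢ / vⱼ` gives `xᵀ A x ≤ ∑ᵢ (xᵢ² / vᵢ) (A v)ᵢ < 0`.

Conversely, a negative definite `A` is invertible, so `A v = -1` has a solution. Split
`v = v⁺ - v⁻`: since `v⁺` and `v⁻` have disjoint supports and `A` is nonnegative off the
diagonal, `v⁻ᵀ A v⁺ ≥ 0`, hence `0 ≥ v⁻ᵀ A v = v⁻ᵀ A v⁺ - v⁻ᵀ A v⁻` forces `v⁻ = 0`. Finally a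
zero coordinate `vᵢ = 0` would make `(A v)ᵢ = ∑_{j ≠ i} Aᵢⱼ vⱼ ≥ 0`.
-/

open Matrix

lemma exists_mulVec_eq_of_negDef {𝕜 ι : Type*} [Field 𝕜] [Preorder 𝕜] [Fintype ι]
    [DecidableEq ι] {A : Matrix ι ι 𝕜}
    (hneg : ∀ x : ι → 𝕜, x ≠ 0 → x ⬝ᵥ (A *ᵥ x) < 0) (b : ι → 𝕜) : ∃ v, A *ᵥ v = b := by
  have hinj : Function.Injective A.mulVec := by
    intro x y hxy
    by_contra hne
    have h := hneg (x - y) (sub_ne_zero.mpr hne)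
    rw [mulVec_sub, hxy, sub_self, dotProduct_zero] at h
    exact h.false
  exact mulVec_surjective_iff_isUnit.mpr (mulVec_injective_iff_isUnit.mp hinj) b

section

variable {𝕜 ι : Type*} [Field 𝕜] [LinearOrder 𝕜] [IsStrictOrderedRing 𝕜] [Fintype ι]
  {A : Matrix ι ι 𝕜}

lemma two_mul_mul_le_sq_mul_div_add_sq_mul_div {a b : 𝕜} (ha : 0 < a) (hb : 0 < b) (x y : 𝕜) :
    2 * (x * y) ≤ x ^ 2 * b / a + y ^ 2 * a / b := by
  rw [div_add_div _ _ ha.ne' hb.ne', le_div_iff₀ (mul_pos ha hb)]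
  nlinarith [sq_nonneg (x * b - y * a)]

lemma negPart_mul_posPart_eq_zero (a : 𝕜) : a⁻ * a⁺ = 0 := by
  rcases le_total a 0 with h | h
  · simp [posPart_eq_zero.mpr h]
  · simp [negPart_eq_zero.mpr h]

lemma dotProduct_mulVec_le_sum_sq_div_mul_mulVec (hA : A.IsSymm)
    (hoff : ∀ i j, i ≠ j → 0 ≤ A i j) {v : ι → 𝕜} (hv : ∀ i, 0 < v i) (x : ι → 𝕜) :
    x ⬝ᵥ (A *ᵥ x) ≤ ∑ i, x i ^ 2 / v i * (A *ᵥ v) i := by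
  set S := ∑ i, ∑ j, A i j * (x i ^ 2 * v j / v i)
  have hS : ∑ i, x i ^ 2 / v i * (A *ᵥ v) i = S := by
    simp only [mulVec, dotProduct, Finset.mul_sum]
    exact Finset.sum_congr rfl fun i _ ↦ Finset.sum_congr rfl fun j _ ↦ by ring
  have hS_comm : ∑ i, ∑ j, A i j * (x j ^ 2 * v i / v j) = S := by
    rw [Finset.sum_comm]
    simp only [hA.apply]
    rfl
  have hterm : ∀ i j, 2 * (x i * (A i j * x j)) ≤
      A i j * (x i ^ 2 * v j / v i) + A i j * (x j ^ 2 * v i / v j) := by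
    intro i j
    rcases eq_or_ne i j with rfl | hij
    · rw [mul_div_cancel_right₀ _ (hv i).ne']
      exact le_of_eq (by ring)
    · linear_combination mul_le_mul_of_nonneg_left
        (two_mul_mul_le_sq_mul_div_add_sq_mul_div (hv i) (hv j) (x i) (x j)) (hoff i j hij)
  have hsum : 2 * (x ⬝ᵥ (A *ᵥ x)) ≤ S + S := by
    calc 2 * (x ⬝ᵥ (A *ᵥ x)) = ∑ i, ∑ j, 2 * (x i * (A i j * x j)) := by
          simp only [mulVec, dotProduct, Finset.mul_sum]
      _ ≤ ∑ i, ∑ j, (A i j * (x i ^ 2 * v j / v i) + A i j * (x j ^ 2 * v i / v j)) :=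
          Finset.sum_le_sum fun i _ ↦ Finset.sum_le_sum fun j _ ↦ hterm i j
      _ = S + S := by simp only [Finset.sum_add_distrib, S, hS_comm]
  linarith

lemma dotProduct_mulVec_neg_of_pos_of_mulVec_neg (hA : A.IsSymm)
    (hoff : ∀ i j, i ≠ j → 0 ≤ A i j) {v : ι → 𝕜} (hv : ∀ i, 0 < v i)
    (hAv : ∀ i, (A *ᵥ v) i < 0) {x : ι → 𝕜} (hx : x ≠ 0) :
    x ⬝ᵥ (A *ᵥ x) < 0 := by
  obtain ⟨i₀, hi₀⟩ := Function.ne_iff.mp hx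
  refine (dotProduct_mulVec_le_sum_sq_div_mul_mulVec hA hoff hv x).trans_lt ?_
  refine Finset.sum_neg' (fun i _ ↦ mul_nonpos_of_nonneg_of_nonpos ?_ (hAv i).le) ?_
  · exact div_nonneg (sq_nonneg _) (hv i).le
  · exact ⟨i₀, Finset.mem_univ _,
      mul_neg_of_pos_of_neg (div_pos (sq_pos_of_ne_zero hi₀) (hv i₀)) (hAv i₀)⟩

lemma dotProduct_mulVec_nonneg_of_mul_eq_zero (hoff : ∀ i j, i ≠ j → 0 ≤ A i j)
    {u w : ι → 𝕜} (hu : 0 ≤ u) (hw : 0 ≤ w) (huw : ∀ i, u i * w i = 0) :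
    0 ≤ u ⬝ᵥ (A *ᵥ w) := by
  simp only [mulVec, dotProduct, Finset.mul_sum]
  refine Finset.sum_nonneg fun i _ ↦ Finset.sum_nonneg fun j _ ↦ ?_
  rcases eq_or_ne i j with rfl | hij
  · rw [mul_left_comm, huw, mul_zero]
  · exact mul_nonneg (hu i) (mul_nonneg (hoff i j hij) (hw j))

lemma nonneg_of_mulVec_nonpos (hoff : ∀ i j, i ≠ j → 0 ≤ A i j)
    (hneg : ∀ x : ι → 𝕜, x ≠ 0 → x ⬝ᵥ (A *ᵥ x) < 0) {v : ι → 𝕜} (hAv : A *ᵥ v ≤ 0) :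
    0 ≤ v := by
  by_contra hv
  have hv_neg : v⁻ ≠ 0 := fun h ↦ hv (negPart_eq_zero.mp h)
  have h_neg_pos : 0 ≤ v⁻ ⬝ᵥ (A *ᵥ v⁺) :=
    dotProduct_mulVec_nonneg_of_mul_eq_zero hoff (negPart_nonneg v) (posPart_nonneg v)
      fun i ↦ negPart_mul_posPart_eq_zero (v i)
  have h_split : v⁻ ⬝ᵥ (A *ᵥ v) = v⁻ ⬝ᵥ (A *ᵥ v⁺) - v⁻ ⬝ᵥ (A *ᵥ v⁻) := by
    rw [← dotProduct_sub, ← mulVec_sub, posPart_sub_negPart]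
  have h_nonpos : v⁻ ⬝ᵥ (A *ᵥ v) ≤ 0 :=
    Finset.sum_nonpos fun i _ ↦ mul_nonpos_of_nonneg_of_nonpos (negPart_nonneg (v i)) (hAv i)
  linarith [hneg _ hv_neg]

lemma pos_of_nonneg_of_mulVec_neg (hoff : ∀ i j, i ≠ j → 0 ≤ A i j) {v : ι → 𝕜}
    (hv : 0 ≤ v) {i : ι} (hAv : (A *ᵥ v) i < 0) : 0 < v i := by
  refine (hv i).lt_of_ne fun hvi ↦ hAv.not_ge ?_
  refine Finset.sum_nonneg fun j _ ↦ ?_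
  rcases eq_or_ne i j with rfl | hij
  · simp [← hvi]
  · exact mul_nonneg (hoff i j hij) (hv j)

end

theorem negDef_iff_exists_pos_mulVec_neg_general
    (n : ℕ) (A : Matrix (Fin n) (Fin n) ℝ)
    (hsymm : A.IsSymm)
    (hoff : ∀ i j : Fin n, i ≠ j → 0 ≤ A i j) :
    (∀ v : Fin n → ℝ, v ≠ 0 → v ⬝ᵥ (A *ᵥ v) < 0) ↔
      ∃ v : Fin n → ℝ, (∀ i, 0 < v i) ∧ ∀ i, (A *ᵥ v) i < 0 := by
  refine ⟨fun hneg ↦ ?_, fun ⟨v, hv, hAv⟩ x hx ↦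
    dotProduct_mulVec_neg_of_pos_of_mulVec_neg hsymm hoff hv hAv hx⟩
  obtain ⟨v, hv⟩ := exists_mulVec_eq_of_negDef hneg fun _ ↦ -1
  have hAv : ∀ i, (A *ᵥ v) i < 0 := fun i ↦ by simp [hv]
  have hv_nonneg : 0 ≤ v := nonneg_of_mulVec_nonpos hoff hneg fun i ↦ (hAv i).le
  exact ⟨v, fun i ↦ pos_of_nonneg_of_mulVec_neg hoff hv_nonneg (hAv i), hAv⟩

/-- Criterion for negative definiteness: a real symmetric `n × n` matrix `A` with
non-negative off-diagonal entries is negative definite (i.e. `vᵀ A v < 0` for every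
nonzero `v`) if and only if there is a vector `v` with all entries strictly positive
such that `A * v` has all entries strictly negative. -/
theorem negDef_iff_exists_pos_mulVec_neg
    (n : ℕ) (hn : 0 < n) (A : Matrix (Fin n) (Fin n) ℝ)
    (hsymm : A.IsSymm)
    (hoff : ∀ i j : Fin n, i ≠ j → 0 ≤ A i j) :
    (∀ v : Fin n → ℝ, v ≠ 0 → v ⬝ᵥ (A *ᵥ v) < 0) ↔
      ∃ v : Fin n → ℝ, (∀ i, 0 < v i) ∧ ∀ i, (A *ᵥ v) i < 0 :=
  negDef_iff_exists_pos_mulVec_neg_general n A hsymm hoff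
end

section
/- Let L be a real lower-triangular n×n matrix whose diagonal entries are all strictly positive. If the symmetric matrix A = L·Lᵀ has all off-diagonal entries non-positive (i.e. A i j ≤ 0 whenever i ≠ j), then all off-diagonal entries of L are non-positive (i.e. L i j ≤ 0 whenever i ≠ j). -/
/-! Induction on the column `j`. For `j < i`, lower triangularity leaves
`(L * Lᵀ) i j = L i j * L j j + ∑ k < j, L i k * L j k`, and each term of the sum is a product
of two entries of earlier columns, both nonpositive by induction. Hence
`L i j * L j j ≤ (L * Lᵀ) i j ≤ 0`, and `0 < L j j` forces `L i j ≤ 0`. -/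

open Matrix

namespace Matrix

variable {ι R : Type*} [Fintype ι] [LinearOrder ι]

theorem mul_le_mul_transpose_apply_of_lower [NonUnitalNonAssocSemiring R] [PartialOrder R]
    [IsOrderedAddMonoid R] {L : Matrix ι ι R} (hlow : ∀ i j, i < j → L i j = 0) {i j : ι}
    (hprev : ∀ k < j, 0 ≤ L i k * L j k) :
    L i j * L j j ≤ (L * Lᵀ) i j := by
  rw [mul_apply, ← Finset.add_sum_erase _ _ (Finset.mem_univ j)]
  refine le_add_of_nonneg_right (Finset.sum_nonneg fun k hk => ?_)
  rcases (Finset.ne_of_mem_erase hk).lt_or_gt with hkj | hjk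
  · exact hprev k hkj
  · simp [hlow j k hjk]

end Matrix

/-- If `L` is a real lower-triangular matrix with strictly positive diagonal entries
and the symmetric matrix `A = L * Lᵀ` has all off-diagonal entries non-positive, then
all off-diagonal entries of `L` are non-positive. -/
theorem cholesky_factor_offDiag_nonpos
    (n : ℕ) (L : Matrix (Fin n) (Fin n) ℝ)
    (hlow : ∀ i j : Fin n, i < j → L i j = 0)
    (hdiag : ∀ i : Fin n, 0 < L i i)
    (hA : ∀ i j : Fin n, i ≠ j → (L * Lᵀ) i j ≤ 0) :
    ∀ i j : Fin n, i ≠ j → L i j ≤ 0 := by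
  intro i j
  induction j using WellFoundedLT.induction generalizing i with
  | ind j ih =>
    intro hij
    rcases hij.lt_or_gt with hij | hji
    · exact (hlow i j hij).le
    · have hprod : L i j * L j j ≤ 0 :=
        (mul_le_mul_transpose_apply_of_lower hlow fun k hk =>
          mul_nonneg_of_nonpos_of_nonpos (ih k hk i (hk.trans hji).ne') (ih k hk j hk.ne')).trans
          (hA i j hji.ne')
      exact nonpos_of_mul_nonpos_left hprod (hdiag j)
end

section
/- Let L be a real lower-triangular n×n matrix whose diagonal entries are all strictly positive and whose off-diagonal entries are all non-positive (i.e. L i j ≤ 0 whenever i ≠ j). Then L is invertible and every entry of L⁻¹ is non-negative. -/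
/-! Forward substitution: row `i` of `L * A = B` gives
`L i i * A i j = B i j - ∑_{k < i} L i k * A k j`, and with `L i k ≤ 0` the right-hand side is
nonnegative as soon as the earlier rows of `A` are. Taking `A = L⁻¹`, `B = 1` gives the claim. -/

open Finset

namespace Matrix

variable {m R : Type*} [Fintype m] [LinearOrder m]

theorem IsLowerTriangular.isUnit [CommRing R] {L : Matrix m m R} (hL : L.IsLowerTriangular)
    (hdiag : ∀ i, IsUnit (L i i)) : IsUnit L := by
  classical
  rw [isUnit_iff_isUnit_det, det_of_isLowerTriangular L hL]
  exact IsUnit.prod_univ_iff.mpr hdiag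

theorem IsLowerTriangular.nonneg_of_mul_eq {n : Type*} [Ring R] [LinearOrder R]
    [IsStrictOrderedRing R] {L : Matrix m m R} {A B : Matrix m n R} (hL : L.IsLowerTriangular)
    (hdiag : ∀ i, 0 < L i i) (hoff : ∀ i j, i ≠ j → L i j ≤ 0) (hmul : L * A = B)
    (hB : ∀ i j, 0 ≤ B i j) (i : m) (j : n) : 0 ≤ A i j := by
  induction i using WellFoundedLT.induction with
  | _ i ih =>
  have hrest : ∑ k ∈ univ.erase i, L i k * A k j ≤ 0 := by
    refine sum_nonpos fun k hk => ?_
    rcases lt_or_gt_of_ne (ne_of_mem_erase hk) with hki | hik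
    · exact mul_nonpos_of_nonpos_of_nonneg (hoff i k hki.ne') (ih k hki)
    · rw [hL hik, zero_mul]
  have hrow : L i i * A i j + ∑ k ∈ univ.erase i, L i k * A k j = B i j := by
    rw [← hmul, mul_apply, add_sum_erase univ (fun k => L i k * A k j) (mem_univ i)]
  refine nonneg_of_mul_nonneg_right ?_ (hdiag i)
  calc 0 ≤ B i j := hB i j
    _ = L i i * A i j + ∑ k ∈ univ.erase i, L i k * A k j := hrow.symm
    _ ≤ L i i * A i j := add_le_of_nonpos_right hrest

end Matrix

/-- A real lower-triangular matrix with strictly positive diagonal entries and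
non-positive off-diagonal entries is invertible and its inverse has non-negative
entries. -/
theorem lowerTriangular_offDiag_nonpos_inv_nonneg
    (n : ℕ) (L : Matrix (Fin n) (Fin n) ℝ)
    (hlow : ∀ i j : Fin n, i < j → L i j = 0)
    (hdiag : ∀ i : Fin n, 0 < L i i)
    (hoff : ∀ i j : Fin n, i ≠ j → L i j ≤ 0) :
    IsUnit L ∧ ∀ i j : Fin n, 0 ≤ L⁻¹ i j := by
  have hL : L.IsLowerTriangular := hlow
  have hunit : IsUnit L := hL.isUnit fun i => (hdiag i).ne'.isUnit
  have hinv : L * L⁻¹ = 1 := L.mul_nonsing_inv (L.isUnit_iff_isUnit_det.mp hunit)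
  exact ⟨hunit, hL.nonneg_of_mul_eq hdiag hoff hinv Matrix.zero_le_one_elem⟩
end

section
/- Let A be a real n×n matrix that is strictly diagonally dominant with strictly positive diagonal entries, i.e. for every index i one has A i i > ∑_{j ≠ i} |A i j| (in particular A i i > 0). Then det A > 0. -/
/-!
Shrink the off-diagonal entries of `A` by a factor `t ∈ [0, 1]`. Every matrix along the way is
still strictly diagonally dominant, hence invertible by Gershgorin's theorem, so its determinant
never vanishes. At `t = 0` the matrix is diagonal with positive diagonal, so by continuity the
determinant stays positive up to `t = 1`, where the matrix is `A`.
-/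

open Finset Set

theorem IsPreconnected.pos_of_ne_zero {X α : Type*} [TopologicalSpace X] [LinearOrder α] [Zero α]
    [TopologicalSpace α] [OrderClosedTopology α] {s : Set X} (hs : IsPreconnected s) {f : X → α}
    (hf : ContinuousOn f s) (hf0 : ∀ x ∈ s, f x ≠ 0) {a b : X} (ha : a ∈ s) (hb : b ∈ s)
    (hfa : 0 < f a) : 0 < f b := by
  by_contra! hfb
  obtain ⟨x, hx, hfx⟩ := hs.intermediate_value hb ha hf ⟨hfb, hfa.le⟩
  exact hf0 x hx hfx

namespace Matrix

def scaleOffDiag {n R : Type*} [DecidableEq n] [Ring R] (t : R) (A : Matrix n n R) :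
    Matrix n n R :=
  diagonal A.diag + t • (A - diagonal A.diag)

section scaleOffDiag

variable {n R : Type*} [DecidableEq n] [Ring R] (t : R) (A : Matrix n n R)

@[simp]
theorem scaleOffDiag_apply_self (i : n) : scaleOffDiag t A i i = A i i := by
  simp [scaleOffDiag]

theorem scaleOffDiag_apply_of_ne {i j : n} (h : i ≠ j) : scaleOffDiag t A i j = t * A i j := by
  simp [scaleOffDiag, diagonal_apply_ne _ h]

@[simp]
theorem scaleOffDiag_zero : scaleOffDiag 0 A = diagonal A.diag := by
  simp [scaleOffDiag]

@[simp]
theorem scaleOffDiag_one : scaleOffDiag 1 A = A := by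
  simp [scaleOffDiag]

theorem continuous_scaleOffDiag [TopologicalSpace R] [IsTopologicalRing R] :
    Continuous fun t : R => scaleOffDiag t A := by
  unfold scaleOffDiag
  fun_prop

end scaleOffDiag

variable {n : Type*} [Fintype n] [DecidableEq n]

theorem sum_erase_abs_scaleOffDiag (t : ℝ) (A : Matrix n n ℝ) (i : n) :
    ∑ j ∈ univ.erase i, |scaleOffDiag t A i j| = |t| * ∑ j ∈ univ.erase i, |A i j| := by
  rw [mul_sum]
  refine sum_congr rfl fun j hj => ?_
  rw [scaleOffDiag_apply_of_ne _ _ (ne_of_mem_erase hj).symm, abs_mul]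

theorem det_scaleOffDiag_ne_zero {A : Matrix n n ℝ}
    (hA : ∀ i, ∑ j ∈ univ.erase i, |A i j| < A i i) {t : ℝ} (ht : |t| ≤ 1) :
    (scaleOffDiag t A).det ≠ 0 := by
  refine det_ne_zero_of_sum_row_lt_diag fun i => ?_
  simp only [Real.norm_eq_abs, scaleOffDiag_apply_self, sum_erase_abs_scaleOffDiag]
  calc |t| * ∑ j ∈ univ.erase i, |A i j| ≤ ∑ j ∈ univ.erase i, |A i j| :=
        mul_le_of_le_one_left (sum_nonneg fun _ _ => abs_nonneg _) ht
    _ < A i i := hA i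
    _ ≤ |A i i| := le_abs_self _

theorem det_pos_of_sum_abs_lt_diag {A : Matrix n n ℝ}
    (hA : ∀ i, ∑ j ∈ univ.erase i, |A i j| < A i i) : 0 < A.det := by
  have hdiag : ∀ i, 0 < A i i := fun i => (sum_nonneg fun _ _ => abs_nonneg _).trans_lt (hA i)
  have hcont : ContinuousOn (fun t => (scaleOffDiag t A).det) (Icc 0 1) :=
    ((continuous_scaleOffDiag A).matrix_det).continuousOn
  have hne : ∀ t ∈ Icc (0 : ℝ) 1, (scaleOffDiag t A).det ≠ 0 := fun t ht =>
    det_scaleOffDiag_ne_zero hA (abs_le.2 ⟨by linarith [ht.1], ht.2⟩)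
  have hpos₀ : 0 < (scaleOffDiag 0 A).det := by
    simpa using prod_pos fun i _ => hdiag i
  simpa using isPreconnected_Icc.pos_of_ne_zero hcont hne (left_mem_Icc.2 zero_le_one)
    (right_mem_Icc.2 zero_le_one) hpos₀

end Matrix

/-- A real square matrix that is strictly diagonally dominant (with strictly positive
diagonal entries) has positive determinant. -/
theorem det_pos_of_strictly_diagonally_dominant
    (n : ℕ) (A : Matrix (Fin n) (Fin n) ℝ)
    (hdom : ∀ i : Fin n, ∑ j ∈ Finset.univ.erase i, |A i j| < A i i) :
    0 < A.det :=
  Matrix.det_pos_of_sum_abs_lt_diag hdom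
end

section
/- Let A be a real n×n matrix all of whose off-diagonal entries are non-positive (i.e. A i j ≤ 0 whenever i ≠ j) and all of whose row sums are strictly positive (i.e. ∑_j A i j > 0 for every i). Then A is strictly diagonally dominant with strictly positive diagonal entries, and det A > 0. -/
/-!
Off-diagonal entries are non-positive, so `|A i j| = -A i j` there and the positive row sums
say exactly that `A` is strictly diagonally dominant. Along `D + t (A - D)`, `t ∈ [0, 1]`, with
`D` the diagonal part of `A`, the matrix stays strictly diagonally dominant and hence, by
Gershgorin, nonsingular; its determinant therefore cannot change sign between `det D > 0` and
`det A`.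
-/

open Finset Matrix

namespace Matrix

variable {n : Type*} [Fintype n] [DecidableEq n] {A : Matrix n n ℝ}

theorem sum_erase_abs_lt_diag_of_offDiag_nonpos (hoff : ∀ i j, i ≠ j → A i j ≤ 0)
    (hrow : ∀ i, 0 < ∑ j, A i j) (i : n) : ∑ j ∈ univ.erase i, |A i j| < A i i := by
  have habs : ∀ j ∈ univ.erase i, |A i j| = -A i j := fun j hj =>
    abs_of_nonpos (hoff i j (ne_of_mem_erase hj).symm)
  rw [sum_congr rfl habs, sum_neg_distrib, neg_lt_iff_pos_add',
    sum_erase_add _ _ (mem_univ i)]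
  exact hrow i

theorem diag_pos_of_sum_abs_row_lt_diag (h : ∀ i, ∑ j ∈ univ.erase i, |A i j| < A i i)
    (i : n) : 0 < A i i :=
  (sum_nonneg fun j _ => abs_nonneg (A i j)).trans_lt (h i)

theorem det_ne_zero_of_sum_abs_row_lt_diag_of_mem_Icc
    (h : ∀ i, ∑ j ∈ univ.erase i, |A i j| < A i i) {t : ℝ} (ht : t ∈ Set.Icc 0 1) :
    (diagonal A.diag + t • (A - diagonal A.diag)).det ≠ 0 := by
  refine det_ne_zero_of_sum_row_lt_diag fun i => ?_
  calc ∑ j ∈ univ.erase i, ‖(diagonal A.diag + t • (A - diagonal A.diag)) i j‖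
      ≤ ∑ j ∈ univ.erase i, |A i j| := sum_le_sum fun j hj => by
        simp only [add_apply, smul_apply, sub_apply, diagonal_apply_ne _ (ne_of_mem_erase hj).symm,
          sub_zero, zero_add, smul_eq_mul, Real.norm_eq_abs, abs_mul]
        exact mul_le_of_le_one_left (abs_nonneg _) (abs_le.2 ⟨by linarith [ht.1], ht.2⟩)
    _ < A i i := h i
    _ = ‖(diagonal A.diag + t • (A - diagonal A.diag)) i i‖ := by
        simp [abs_of_pos (diag_pos_of_sum_abs_row_lt_diag h i)]

theorem det_pos_of_sum_abs_row_lt_diag (h : ∀ i, ∑ j ∈ univ.erase i, |A i j| < A i i) :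
    0 < A.det := by
  set f : ℝ → ℝ := fun t => (diagonal A.diag + t • (A - diagonal A.diag)).det with hf
  have hcont : ContinuousOn f (Set.Icc 0 1) := by fun_prop
  have hf0 : 0 < f 0 := by
    simp only [hf, zero_smul, add_zero, det_diagonal]
    exact prod_pos fun i _ => diag_pos_of_sum_abs_row_lt_diag h i
  have hf1 : f 1 = A.det := by simp [hf]
  by_contra! hA
  obtain ⟨t, ht, hzero⟩ := intermediate_value_Icc' zero_le_one hcont ⟨hf1 ▸ hA, hf0.le⟩
  exact det_ne_zero_of_sum_abs_row_lt_diag_of_mem_Icc h ht hzero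

end Matrix

/-- A real square matrix with non-positive off-diagonal entries and strictly positive
row sums is strictly diagonally dominant with strictly positive diagonal entries, and
has positive determinant. -/
theorem det_pos_of_offDiag_nonpos_rowSums_pos
    (n : ℕ) (A : Matrix (Fin n) (Fin n) ℝ)
    (hoff : ∀ i j : Fin n, i ≠ j → A i j ≤ 0)
    (hrow : ∀ i : Fin n, 0 < ∑ j, A i j) :
    (∀ i : Fin n, ∑ j ∈ Finset.univ.erase i, |A i j| < A i i) ∧
      (∀ i : Fin n, 0 < A i i) ∧ 0 < A.det := by
  have hdom := A.sum_erase_abs_lt_diag_of_offDiag_nonpos hoff hrow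
  exact ⟨hdom, A.diag_pos_of_sum_abs_row_lt_diag hdom, A.det_pos_of_sum_abs_row_lt_diag hdom⟩
end
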